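/- arXiv:2310.01163 — 5 statements merged into one kernel-verified Lean document; each statement's English description precedes it below -/
import Mathlib

section
/- Every controlled invariant subset of S is contained in every invariance iterate: if T ⊆ S is controlled invariant, then T ⊆ IV(S, k) for all k, and hence T ⊆ ⋂_{k ∈ ℕ} IV(S, k). -/
/-- Backward reachability operator. -/
def BR {σ α : Type*} (F : σ → α → Set σ) (T : Set σ) : Set σ :=
  {s | ∃ a, F s a ⊆ T}

/-- A set `T` is controlled invariant if from every state in `T` some action
keeps all successors inside `T`. -/
def ControlledInvariant {σ α : Type*} (F : σ → α → Set σ) (T : Set σ) : Prop :=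
  ∀ s ∈ T, ∃ a, F s a ⊆ T

/-- Invariance iterates: `IV F S 0 = S`, `IV F S (k+1) = BR F (IV F S k) ∩ S`. -/
def IV {σ α : Type*} (F : σ → α → Set σ) (S : Set σ) : ℕ → Set σ
  | 0 => S
  | k + 1 => BR F (IV F S k) ∩ S

/-- Every controlled invariant subset of `S` is contained in every invariance
iterate, and hence in their intersection. -/
theorem controlledInvariant_subset_IV {σ α : Type*} (F : σ → α → Set σ)
    (S T : Set σ) (hTS : T ⊆ S) (hT : ControlledInvariant F T) :
    (∀ k : ℕ, T ⊆ IV F S k) ∧ T ⊆ ⋂ k : ℕ, IV F S k := by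
  have h : ∀ k : ℕ, T ⊆ IV F S k := by
    intro k
    induction k with
    | zero => exact hTS
    | succ k ih =>
      intro s hs
      obtain ⟨a, ha⟩ := hT s hs
      exact ⟨⟨a, ha.trans ih⟩, hTS hs⟩
  exact ⟨h, Set.subset_iInter h⟩
end

section
/- If the action type α is finite, then for every decreasing sequence of sets T₀ ⊇ T₁ ⊇ T₂ ⊇ ⋯ of states, the intersection of the backward reachable sets is contained in the backward reachable set of the intersection: ⋂_{k ∈ ℕ} BR(T_k) ⊆ BR(⋂_{k ∈ ℕ} T_k) (and hence, by monotonicity of BR, equality holds). -/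
/-- With finitely many actions, for a decreasing sequence of sets the
intersection of the backward reachable sets is contained in the backward
reachable set of the intersection. -/
theorem iInter_BR_subset_BR_iInter {σ α : Type*} [Finite α]
    (F : σ → α → Set σ) (T : ℕ → Set σ) (hdec : ∀ k : ℕ, T (k + 1) ⊆ T k) :
    ⋂ k : ℕ, BR F (T k) ⊆ BR F (⋂ k : ℕ, T k) := by
  have hant : Antitone T := antitone_nat_of_succ_le hdec
  intro s hs
  simp only [Set.mem_iInter, BR, Set.mem_setOf_eq] at hs ⊢
  choose f hf using hs
  obtain ⟨a, ha⟩ := Finite.exists_infinite_fiber f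
  refine ⟨a, Set.subset_iInter fun k => ?_⟩
  obtain ⟨n, hfn, hgt⟩ := (Set.infinite_coe_iff.mp ha).exists_gt k
  rw [Set.mem_preimage, Set.mem_singleton_iff] at hfn
  exact hfn ▸ (hf n).trans (hant hgt.le)
end

section
/- If the action type α is finite, then for every set S of states, the set S_inv = ⋂_{k ∈ ℕ} IV(S, k) satisfies the fixed-point equation S_inv = BR(S_inv) ∩ S. -/
lemma BR_mono {σ α : Type*} (F : σ → α → Set σ) {T T' : Set σ} (h : T ⊆ T') :
    BR F T ⊆ BR F T' := fun s ⟨a, ha⟩ => ⟨a, ha.trans h⟩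

lemma IV_succ_subset {σ α : Type*} (F : σ → α → Set σ) (S : Set σ) :
    ∀ k, IV F S (k + 1) ⊆ IV F S k := by
  intro k
  induction k with
  | zero => exact Set.inter_subset_right
  | succ n ih =>
    exact Set.inter_subset_inter_left _ (BR_mono F ih)

lemma IV_antitone {σ α : Type*} (F : σ → α → Set σ) (S : Set σ) :
    Antitone (IV F S) :=
  antitone_nat_of_succ_le (IV_succ_subset F S)

/-- With finitely many actions, the intersection of the invariance iterates
satisfies the fixed-point equation `S_inv = BR(S_inv) ∩ S`. -/
theorem iInter_IV_fixedPoint {σ α : Type*} [Finite α]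
    (F : σ → α → Set σ) (S : Set σ) :
    (⋂ k : ℕ, IV F S k) = BR F (⋂ k : ℕ, IV F S k) ∩ S := by
  ext s
  simp only [Set.mem_iInter, Set.mem_inter_iff]
  constructor
  · intro h
    refine ⟨?_, h 0⟩
    -- for each k, pick an action
    have hchoice : ∀ k, ∃ a, F s a ⊆ IV F S k := fun k => (h (k + 1)).1
    choose g hg using hchoice
    obtain ⟨a, ha⟩ : ∃ a : α, (g ⁻¹' {a}).Infinite := by
      obtain ⟨a, ha⟩ := Finite.exists_infinite_fiber g
      exact ⟨a, Set.infinite_coe_iff.mp ha⟩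
    refine ⟨a, Set.subset_iInter fun k => ?_⟩
    obtain ⟨m, hm, hmk⟩ := ha.exists_gt k
    simp only [Set.mem_preimage, Set.mem_singleton_iff] at hm
    have : F s a ⊆ IV F S m := hm ▸ hg m
    exact this.trans (IV_antitone F S hmk.le)
  · rintro ⟨⟨a, ha⟩, hs⟩ k
    induction k with
    | zero => exact hs
    | succ n ih =>
      exact ⟨⟨a, ha.trans (Set.iInter_subset _ n)⟩, hs⟩
end

section
/- If the action type α is finite, then ⋂_{k ∈ ℕ} IV(S, k) is a controlled invariant set contained in S. -/
/-- With finitely many actions, `⋂ k, IV F S k` is a controlled invariant set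
contained in `S`. -/
theorem iInter_IV_controlledInvariant {σ α : Type*} [Finite α]
    (F : σ → α → Set σ) (S : Set σ) :
    ControlledInvariant F (⋂ k : ℕ, IV F S k) ∧ (⋂ k : ℕ, IV F S k) ⊆ S := by
  have hmono : ∀ k, IV F S (k + 1) ⊆ IV F S k := by
    intro k
    induction k with
    | zero => exact fun s hs => hs.2
    | succ k ih =>
      intro s hs
      obtain ⟨⟨a, ha⟩, hS⟩ := hs
      exact ⟨⟨a, fun x hx => ih (ha hx)⟩, hS⟩
  have hanti : ∀ {j k : ℕ}, j ≤ k → IV F S k ⊆ IV F S j := by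
    intro j k h
    induction h with
    | refl => exact fun _ h => h
    | step h ih => exact fun s hs => ih (hmono _ hs)
  constructor
  · intro s hs
    simp only [Set.mem_iInter] at hs
    -- for each k, get an action
    have hk : ∀ k : ℕ, ∃ a, F s a ⊆ IV F S k := by
      intro k
      have := hs (k + 1)
      exact this.1
    choose f hf using hk
    obtain ⟨a, ha⟩ := Finite.exists_infinite_fiber f
    refine ⟨a, fun x hx => ?_⟩
    simp only [Set.mem_iInter]
    intro k
    have hinf : (f ⁻¹' {a}).Infinite := Set.infinite_coe_iff.mp ha
    obtain ⟨k', hk'mem, hk'gt⟩ := hinf.exists_gt k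
    have hfa : f k' = a := hk'mem
    exact hanti (le_of_lt hk'gt) (hf k' (hfa ▸ hx))
  · exact fun s hs => Set.mem_iInter.mp hs 0
end

section
/- (Maximal controlled invariant set via backward iteration.) If the action type α is finite, then for every set S of states, the set S_inv = ⋂_{k ∈ ℕ} IV(S, k) is the maximal controlled invariant set within S: S_inv ⊆ S, S_inv is controlled invariant, and every controlled invariant set T with T ⊆ S satisfies T ⊆ S_inv. -/
/-- Maximal controlled invariant set via backward iteration: with finitely many
actions, `S_inv = ⋂ k, IV F S k` is contained in `S`, is controlled invariant,
and contains every controlled invariant subset of `S`. -/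
theorem iInter_IV_maximal_controlledInvariant {σ α : Type*} [Finite α]
    (F : σ → α → Set σ) (S : Set σ) :
    (⋂ k : ℕ, IV F S k) ⊆ S ∧
    ControlledInvariant F (⋂ k : ℕ, IV F S k) ∧
    ∀ T : Set σ, ControlledInvariant F T → T ⊆ S → T ⊆ ⋂ k : ℕ, IV F S k := by
  refine ⟨?_, ?_, ?_⟩
  · exact fun s hs => Set.mem_iInter.mp hs 0
  · intro s hs
    have hmem := Set.mem_iInter.mp hs
    -- for each k, choose an action
    have hchoice : ∀ k : ℕ, ∃ a : α, F s a ⊆ IV F S k := fun k =>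
      (hmem (k + 1)).1
    choose g hg using hchoice
    obtain ⟨a, ha⟩ := Finite.exists_infinite_fiber g
    refine ⟨a, ?_⟩
    have : ∀ k : ℕ, F s a ⊆ IV F S k := by
      intro k
      obtain ⟨m, hm, hma⟩ := (Set.infinite_coe_iff.mp ha).exists_gt k
      exact (show F s a ⊆ IV F S m from hm ▸ hg m).trans (IV_antitone F S hma.le)
    exact fun x hx => Set.mem_iInter.mpr fun k => this k hx
  · intro T hT hTS
    have h : ∀ k, T ⊆ IV F S k := by
      intro k
      induction k with
      | zero => exact hTS
      | succ n ih =>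
        intro s hs
        obtain ⟨a, ha⟩ := hT s hs
        exact ⟨⟨a, ha.trans ih⟩, hTS hs⟩
    exact fun s hs => Set.mem_iInter.mpr fun k => h k hs
end
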